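/- Let d ≥ 2 be an even integer and c ≥ 1 with gcd(d,c) = 1. Then 2·s(d,c) + s(2c,d) = (d² + c² + 1)/(6cd) - 1/2 - (1/4)·S₄(c, d/2). -/

import Mathlib

/-
Dedekind reciprocity `s(d, c) + s(c, d) = (d² + c² + 1) / (12cd) - 1/4` reduces the claim to
`s(2c, d) = 2 s(c, d) - S₄(c, d/2) / 4`.

Reciprocity is proved elementarily: `12 b s(a, b)` is a polynomial in `a, b` minus
`12 ∑ k ⌊ka/b⌋`, and the symmetric combination `a ∑ k ⌊ka/b⌋ + b ∑ j ⌊jb/a⌋` is evaluated by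
counting the lattice points under the diagonal of the `a × b` rectangle, using that
`k ↦ ka mod b` permutes the nonzero residues.

For the second identity write `d = 2m` and pair the terms `k = r` and `k = r + m` of both sums.
Since `c` is odd, the second term of each pair is shifted by a half period, and with `y = rc/(2m)`
the identities `((y)) + ((y + 1/2)) = ((2y))` and `((y + 1/2)) - ((y)) = (-1)^⌊2y⌋ / 2`
leave exactly `(-1)^⌊rc/m⌋ / 4` per pair.
-/

open Finset

/-- The sawtooth function `((x))`. -/
noncomputable def sawtooth (x : ℝ) : ℝ := if (⌊x⌋ : ℝ) = x then 0 else x - ⌊x⌋ - 1/2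

/-- The classical Dedekind sum `s(a,b)`. -/
noncomputable def dedekindS (a b : ℤ) : ℝ :=
  ∑ k ∈ Finset.Icc (1 : ℤ) (|b| - 1), sawtooth ((k : ℝ) / b) * sawtooth ((k * a : ℝ) / b)

/-- The Hardy sum `S₄(d,c) = ∑_{k=1}^{c-1} (-1)^⌊kd/c⌋`. -/
noncomputable def hardyS4 (d c : ℤ) : ℤ :=
  ∑ k ∈ Finset.Icc (1 : ℤ) (c - 1), ((⌊(k * d : ℚ) / c⌋).negOnePow : ℤ)

theorem sawtooth_of_lt_of_lt {x : ℝ} {n : ℤ} (h₁ : n < x) (h₂ : x < n + 1) :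
    sawtooth x = x - n - 1 / 2 := by
  rw [sawtooth, Int.floor_eq_iff.2 ⟨h₁.le, h₂⟩, if_neg h₁.ne]

theorem sawtooth_add_intCast (x : ℝ) (n : ℤ) : sawtooth (x + n) = sawtooth x := by
  simp only [sawtooth, Int.floor_add_intCast, Int.cast_add, add_left_inj]
  split_ifs <;> ring

theorem sawtooth_half : sawtooth (1 / 2) = 0 := by
  rw [sawtooth_of_lt_of_lt (n := 0) (by norm_num) (by norm_num)]
  norm_num

theorem two_mul_sawtooth_and_two_mul_sawtooth_add_half {y : ℝ} (hy : ∀ n : ℤ, 2 * y ≠ n) :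
    2 * sawtooth y = sawtooth (2 * y) - ((⌊2 * y⌋.negOnePow : ℤ) : ℝ) / 2 ∧
      2 * sawtooth (y + 1 / 2) = sawtooth (2 * y) + ((⌊2 * y⌋.negOnePow : ℤ) : ℝ) / 2 := by
  have hlt : (⌊2 * y⌋ : ℝ) < 2 * y := (Int.floor_le _).lt_of_ne (hy _).symm
  have hlt' : 2 * y < ⌊2 * y⌋ + 1 := Int.lt_floor_add_one _
  rw [sawtooth_of_lt_of_lt hlt hlt']
  obtain ⟨q, hq | hq⟩ := Int.even_or_odd' ⌊2 * y⌋ <;> rw [hq] at hlt hlt' ⊢ <;>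
    push_cast at hlt hlt'
  · rw [sawtooth_of_lt_of_lt (n := q) (by linarith) (by linarith),
      sawtooth_of_lt_of_lt (n := q) (by linarith) (by linarith), Int.negOnePow_two_mul]
    push_cast; constructor <;> ring
  · rw [sawtooth_of_lt_of_lt (n := q) (by linarith) (by linarith),
      sawtooth_of_lt_of_lt (n := q + 1) (by push_cast; linarith) (by push_cast; linarith),
      Int.negOnePow_two_mul_add_one]
    push_cast; constructor <;> ring

/-- This is `dedekindTerm_pair` at `x = r/(2m)`, `y = rc/(2m)`. -/
theorem sawtooth_pair {x y : ℝ} (hx₀ : 0 < x) (hx₁ : x < 1 / 2) (hy : ∀ n : ℤ, 2 * y ≠ n) :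
    sawtooth x * sawtooth (2 * y) + sawtooth (x + 1 / 2) * sawtooth (2 * y)
      = 2 * (sawtooth x * sawtooth y + sawtooth (x + 1 / 2) * sawtooth (y + 1 / 2))
        - ((⌊2 * y⌋.negOnePow : ℤ) : ℝ) / 4 := by
  obtain ⟨hy₀, hy₁⟩ := two_mul_sawtooth_and_two_mul_sawtooth_add_half hy
  rw [sawtooth_of_lt_of_lt (x := x) (n := 0) (by simpa) (by simp; linarith),
    sawtooth_of_lt_of_lt (x := x + 1 / 2) (n := 0) (by simp; linarith) (by simp; linarith)]
  linear_combination (1 / 2 - x) * hy₀ - x * hy₁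

theorem sum_Icc_one_telescope (f : ℤ → ℤ) {n : ℤ} (hn : 0 ≤ n) :
    ∑ k ∈ Icc 1 n, (f k - f (k - 1)) = f n - f 0 := by
  induction n, hn using Int.leInduction with
  | base => simp
  | succ n hn ih =>
    rw [← insert_Icc_right_eq_Icc_add_one (by omega), sum_insert (by simp), ih,
      add_sub_cancel_right]
    ring

theorem two_mul_sum_Icc_id {n : ℤ} (hn : 0 ≤ n) : 2 * ∑ k ∈ Icc 1 n, k = n * (n + 1) := by
  rw [mul_sum]
  refine (sum_congr rfl fun k _ => ?_).trans
    ((sum_Icc_one_telescope (fun k => k * (k + 1)) hn).trans ?_) <;> ring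

theorem six_mul_sum_Icc_sq {n : ℤ} (hn : 0 ≤ n) :
    6 * ∑ k ∈ Icc 1 n, k ^ 2 = n * (n + 1) * (2 * n + 1) := by
  rw [mul_sum]
  refine (sum_congr rfl fun k _ => ?_).trans
    ((sum_Icc_one_telescope (fun k => k * (k + 1) * (2 * k + 1)) hn).trans ?_) <;> ring

theorem sum_Icc_odd_eq_sq {n : ℤ} (hn : 0 ≤ n) : ∑ k ∈ Icc 1 n, (2 * k - 1) = n ^ 2 :=
  (sum_congr rfl fun k _ => by ring).trans ((sum_Icc_one_telescope (· ^ 2) hn).trans (by ring))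

theorem not_dvd_mul_of_isCoprime {a b k : ℤ} (h : IsCoprime a b) (hk₀ : 0 < k) (hk : k < b) :
    ¬ b ∣ k * a := fun hdvd => by
  have := Int.le_of_dvd hk₀ (h.symm.dvd_of_dvd_mul_right hdvd)
  omega

theorem sum_Icc_comp_mul_emod {M : Type*} [AddCommMonoid M] {a b : ℤ} (h : IsCoprime a b)
    (g : ℤ → M) : ∑ k ∈ Icc 1 (b - 1), g (k * a % b) = ∑ k ∈ Icc 1 (b - 1), g k := by
  have hmaps : Set.MapsTo (fun k => k * a % b) (Icc 1 (b - 1)) (Icc 1 (b - 1)) := by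
    intro k hk
    simp only [coe_Icc, Set.mem_Icc] at hk ⊢
    have hne : k * a % b ≠ 0 := fun h0 =>
      not_dvd_mul_of_isCoprime h (by omega) (by omega) (Int.dvd_of_emod_eq_zero h0)
    have := Int.emod_nonneg (k * a) (b := b) (by omega)
    have := Int.emod_lt_of_pos (k * a) (b := b) (by omega)
    omega
  have hinj : Set.InjOn (fun k => k * a % b) (Icc 1 (b - 1)) := by
    intro k hk l hl hkl
    simp only [coe_Icc, Set.mem_Icc] at hk hl
    have hdvd : b ∣ (k - l) * a := by
      rw [sub_mul]; exact Int.ModEq.dvd hkl.symm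
    have := Int.eq_zero_of_abs_lt_dvd (h.symm.dvd_of_dvd_mul_right hdvd) (by rw [abs_lt]; omega)
    omega
  exact sum_nbij _ (fun k hk => hmaps hk) hinj
    (surjOn_of_injOn_of_card_le _ hmaps hinj le_rfl) fun _ _ => rfl

noncomputable def floorSum (a b : ℤ) : ℤ := ∑ k ∈ Icc 1 (b - 1), k * a / b

noncomputable def weightedFloorSum (a b : ℤ) : ℤ := ∑ k ∈ Icc 1 (b - 1), k * (k * a / b)

noncomputable def floorSqSum (a b : ℤ) : ℤ := ∑ k ∈ Icc 1 (b - 1), (k * a / b) ^ 2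

theorem two_mul_floorSum {a b : ℤ} (hb : 1 ≤ b) (h : IsCoprime a b) :
    2 * floorSum a b = (a - 1) * (b - 1) := by
  have hsum : a * ∑ k ∈ Icc 1 (b - 1), k = b * floorSum a b + ∑ k ∈ Icc 1 (b - 1), k := by
    have hperm : ∑ k ∈ Icc 1 (b - 1), k * a % b = ∑ k ∈ Icc 1 (b - 1), k :=
      sum_Icc_comp_mul_emod h fun k => k
    rw [floorSum, mul_sum, mul_sum, ← hperm, ← sum_add_distrib]
    exact sum_congr rfl fun k _ => by rw [Int.mul_ediv_add_emod, mul_comm]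
  have hS1 := two_mul_sum_Icc_id (n := b - 1) (by omega)
  refine mul_left_cancel₀ (by omega : b ≠ 0) ?_
  linear_combination (a - 1) * hS1 - 2 * hsum

theorem sq_sum_sub_weightedFloorSum_add_floorSqSum {a b : ℤ} (h : IsCoprime a b) :
    a ^ 2 * ∑ k ∈ Icc 1 (b - 1), k ^ 2 - 2 * a * b * weightedFloorSum a b + b ^ 2 * floorSqSum a b
      = ∑ k ∈ Icc 1 (b - 1), k ^ 2 := by
  have hperm : ∑ k ∈ Icc 1 (b - 1), (k * a % b) ^ 2 = ∑ k ∈ Icc 1 (b - 1), k ^ 2 :=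
    sum_Icc_comp_mul_emod h fun k => k ^ 2
  rw [weightedFloorSum, floorSqSum, mul_sum, mul_sum, mul_sum, ← sum_sub_distrib,
    ← sum_add_distrib, ← hperm]
  refine sum_congr rfl fun k _ => ?_
  rw [Int.emod_def]
  ring

/-- `⌊ka/b⌋²` as a sum of odd numbers `2j - 1` over the lattice points `(j, k)` below the
line `jb = ka`. -/
theorem sq_mul_ediv_eq_sum_odd {a b k : ℤ} (ha : 0 ≤ a) (h : IsCoprime a b) (hk₀ : 0 < k)
    (hk : k < b) :
    (k * a / b) ^ 2 = ∑ j ∈ Icc 1 (a - 1), (2 * j - 1) * if j * b < k * a then 1 else 0 := by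
  have hb : 0 < b := by omega
  have hfilter : {j ∈ Icc 1 (a - 1) | j * b < k * a} = Icc 1 (k * a / b) := by
    ext j
    have hne : j * b ≠ k * a := fun heq => not_dvd_mul_of_isCoprime h hk₀ hk ⟨j, by linarith⟩
    simp only [mem_filter, mem_Icc, Int.le_ediv_iff_mul_le hb]
    constructor
    · rintro ⟨⟨hj, -⟩, hlt⟩
      exact ⟨hj, hlt.le⟩
    · rintro ⟨hj, hle⟩
      refine ⟨⟨hj, ?_⟩, lt_of_le_of_ne hle hne⟩
      nlinarith
  simp only [mul_boole]
  rw [← sum_filter, hfilter, sum_Icc_odd_eq_sq (Int.ediv_nonneg (by positivity) hb.le)]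

theorem card_filter_mul_lt_mul {a b j : ℤ} (ha : 0 < a) (hb : 1 ≤ b) (hj₀ : 0 ≤ j) (hj : j < a) :
    (#{k ∈ Icc 1 (b - 1) | j * b < k * a} : ℤ) = b - 1 - j * b / a := by
  have hlt : j * b / a < b := (Int.ediv_lt_iff_lt_mul ha).2 (by nlinarith)
  have hnonneg : 0 ≤ j * b / a := Int.ediv_nonneg (by positivity) ha.le
  have hfilter : {k ∈ Icc 1 (b - 1) | j * b < k * a} = Icc (j * b / a + 1) (b - 1) := by
    ext k
    simp only [mem_filter, mem_Icc, ← Int.ediv_lt_iff_lt_mul ha]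
    omega
  rw [hfilter, Int.card_Icc]
  omega

theorem floorSqSum_eq {a b : ℤ} (ha : 1 ≤ a) (hb : 1 ≤ b) (h : IsCoprime a b) :
    floorSqSum a b = (a - 1) ^ 2 * (b - 1) - 2 * weightedFloorSum b a + floorSum b a := by
  have hexpand : ∀ j ∈ Icc 1 (a - 1), (2 * j - 1) * (b - 1 - j * b / a)
      = (b - 1) * (2 * j - 1) - 2 * (j * (j * b / a)) + j * b / a := fun j _ => by ring
  calc floorSqSum a b
      = ∑ k ∈ Icc 1 (b - 1), ∑ j ∈ Icc 1 (a - 1),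
          (2 * j - 1) * if j * b < k * a then 1 else 0 := by
        refine sum_congr rfl fun k hk => ?_
        rw [mem_Icc] at hk
        exact sq_mul_ediv_eq_sum_odd (by omega) h (by omega) (by omega)
    _ = ∑ j ∈ Icc 1 (a - 1), (2 * j - 1) * (b - 1 - j * b / a) := by
        rw [sum_comm]
        refine sum_congr rfl fun j hj => ?_
        rw [mem_Icc] at hj
        rw [← mul_sum, sum_boole, card_filter_mul_lt_mul (by omega) hb (by omega) (by omega)]
    _ = (a - 1) ^ 2 * (b - 1) - 2 * weightedFloorSum b a + floorSum b a := by
        rw [sum_congr rfl hexpand, sum_add_distrib, sum_sub_distrib, ← mul_sum, ← mul_sum,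
          sum_Icc_odd_eq_sq (by omega), weightedFloorSum, floorSum]
        ring

theorem weightedFloorSum_reciprocity {a b : ℤ} (ha : 1 ≤ a) (hb : 1 ≤ b) (h : IsCoprime a b) :
    12 * (a * weightedFloorSum a b + b * weightedFloorSum b a)
      = (a - 1) * (b - 1) * (8 * a * b - a - b - 1) := by
  have hT := two_mul_floorSum ha h.symm
  have hQ := floorSqSum_eq ha hb h
  have hQ' := sq_sum_sub_weightedFloorSum_add_floorSqSum h
  have hS2 := six_mul_sum_Icc_sq (n := b - 1) (by omega)
  refine mul_left_cancel₀ (by omega : b ≠ 0) ?_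
  linear_combination (a ^ 2 - 1) * hS2 - 6 * hQ' + 6 * b ^ 2 * hQ + 3 * b ^ 2 * hT

theorem sawtooth_intCast_div {n b : ℤ} (hb : 0 < b) (h : ¬ b ∣ n) :
    sawtooth (n / b) = n / b - (n / b : ℤ) - 1 / 2 := by
  have hbR : (0 : ℝ) < b := by exact_mod_cast hb
  have hlt : n / b * b < n :=
    (Int.ediv_mul_le n hb.ne').lt_of_ne fun heq => h ⟨n / b, by rw [mul_comm]; exact heq.symm⟩
  refine sawtooth_of_lt_of_lt ?_ ?_
  · rw [lt_div_iff₀ hbR]; exact_mod_cast hlt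
  · rw [div_lt_iff₀ hbR]; exact_mod_cast Int.lt_ediv_add_one_mul_self n hb

theorem sum_Icc_two_mul_sub_eq_zero {b : ℤ} (hb : 1 ≤ b) :
    ∑ k ∈ Icc 1 (b - 1), (2 * k - b) = 0 :=
  (sum_congr rfl fun k _ => by ring).trans
    ((sum_Icc_one_telescope (fun k => k * (k + 1 - b)) (by omega)).trans (by ring))

theorem sum_sawtooth_mul_div_eq_zero {a b : ℤ} (hb : 1 ≤ b) (h : IsCoprime a b) :
    ∑ k ∈ Icc 1 (b - 1), sawtooth ((k : ℝ) * a / b) = 0 := by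
  have hbR : (b : ℝ) ≠ 0 := by exact_mod_cast (by omega : b ≠ 0)
  have hperiodic : ∀ k ∈ Icc 1 (b - 1),
      sawtooth ((k : ℝ) * a / b) = sawtooth ((k * a % b : ℤ) / b) := by
    intro k _
    rw [← sawtooth_add_intCast (((k * a % b : ℤ) : ℝ) / b) (k * a / b)]
    congr 1
    rw [Int.emod_def]
    push_cast
    field_simp
    ring
  have hlinear : ∀ k ∈ Icc 1 (b - 1),
      sawtooth ((k : ℤ) / b) = ((2 * k - b : ℤ) : ℝ) / (2 * b) := by
    intro k hk
    rw [mem_Icc] at hk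
    have hbpos : (0 : ℝ) < b := by exact_mod_cast (by omega : 0 < b)
    rw [sawtooth_of_lt_of_lt (n := 0) (by simpa using div_pos (by exact_mod_cast hk.1) hbpos) ?_]
    · push_cast; field_simp; ring
    · rw [Int.cast_zero, zero_add, div_lt_one hbpos]; exact_mod_cast hk.2.trans_lt (by omega)
  rw [sum_congr rfl hperiodic, sum_Icc_comp_mul_emod h fun n => sawtooth ((n : ℝ) / b),
    sum_congr rfl hlinear, ← sum_div, ← Int.cast_sum, sum_Icc_two_mul_sub_eq_zero hb]
  simp

theorem twelve_mul_dedekindS {a b : ℤ} (hb : 1 ≤ b) (h : IsCoprime a b) :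
    12 * b * dedekindS a b
      = 2 * a * (b - 1) * (2 * b - 1) - 12 * weightedFloorSum a b - 3 * b * (b - 1) := by
  have hbpos : (0 : ℝ) < b := by exact_mod_cast (by omega : 0 < b)
  have hterm : ∀ k ∈ Icc 1 (b - 1), sawtooth ((k : ℝ) / b) * sawtooth ((k : ℝ) * a / b)
      = ((2 * a * k ^ 2 - 2 * b * (k * (k * a / b)) - b * k : ℤ) : ℝ) / (2 * b ^ 2)
        - sawtooth ((k : ℝ) * a / b) / 2 := by
    intro k hk
    rw [mem_Icc] at hk
    rw [sawtooth_of_lt_of_lt (x := (k : ℝ) / b) (n := 0)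
      (by simpa using div_pos (by exact_mod_cast hk.1) hbpos) ?_]
    · have := sawtooth_intCast_div (n := k * a) (by omega)
        (not_dvd_mul_of_isCoprime h (by omega) (by omega))
      push_cast at this ⊢
      rw [this]
      field_simp
      ring
    · rw [Int.cast_zero, zero_add, div_lt_one hbpos]; exact_mod_cast hk.2.trans_lt (by omega)
  have hint : 6 * ∑ k ∈ Icc 1 (b - 1), (2 * a * k ^ 2 - 2 * b * (k * (k * a / b)) - b * k)
      = b * (2 * a * (b - 1) * (2 * b - 1) - 12 * weightedFloorSum a b - 3 * b * (b - 1)) := by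
    rw [sum_sub_distrib, sum_sub_distrib, ← mul_sum, ← mul_sum, ← mul_sum, weightedFloorSum]
    linear_combination 2 * a * six_mul_sum_Icc_sq (n := b - 1) (by omega)
      - 3 * b * two_mul_sum_Icc_id (n := b - 1) (by omega)
  rw [dedekindS, abs_of_pos (by omega), sum_congr rfl hterm, sum_sub_distrib, ← sum_div,
    ← sum_div, sum_sawtooth_mul_div_eq_zero hb h, ← Int.cast_sum]
  have hintR : (6 : ℝ)
      * (∑ k ∈ Icc 1 (b - 1), (2 * a * k ^ 2 - 2 * b * (k * (k * a / b)) - b * k) : ℤ)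
      = b * (2 * a * (b - 1) * (2 * b - 1) - 12 * weightedFloorSum a b - 3 * b * (b - 1)) := by
    exact_mod_cast hint
  field_simp
  linear_combination 2 * hintR

theorem dedekindS_add_dedekindS {a b : ℤ} (ha : 1 ≤ a) (hb : 1 ≤ b) (h : IsCoprime a b) :
    dedekindS a b + dedekindS b a = ((a : ℝ) ^ 2 + b ^ 2 + 1) / (12 * a * b) - 1 / 4 := by
  have hab := twelve_mul_dedekindS hb h
  have hba := twelve_mul_dedekindS ha h.symm
  have hD : (12 : ℝ) * (a * weightedFloorSum a b + b * weightedFloorSum b a)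
      = (a - 1) * (b - 1) * (8 * a * b - a - b - 1) := by
    exact_mod_cast weightedFloorSum_reciprocity ha hb h
  have haR : (a : ℝ) ≠ 0 := by exact_mod_cast (by omega : a ≠ 0)
  have hbR : (b : ℝ) ≠ 0 := by exact_mod_cast (by omega : b ≠ 0)
  field_simp
  linear_combination 4 * a * hab + 4 * b * hba - 4 * hD

theorem sum_Icc_two_mul_eq_sum_pairs {M : Type*} [AddCommMonoid M] (f : ℤ → M) {m : ℤ}
    (hm : 1 ≤ m) :
    ∑ k ∈ Icc 1 (2 * m - 1), f k = ∑ r ∈ Icc 1 (m - 1), (f r + f (r + m)) + f m := by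
  have hsplit : Icc 1 (2 * m - 1)
      = insert m (Icc 1 (m - 1) ∪ (Icc 1 (m - 1)).map (addRightEmbedding m)) := by
    rw [map_add_right_Icc]
    ext k
    simp only [mem_insert, mem_union, mem_Icc]
    omega
  have hdisj : Disjoint (Icc 1 (m - 1)) ((Icc 1 (m - 1)).map (addRightEmbedding m)) := by
    rw [map_add_right_Icc, disjoint_left]
    intro k hk hk'
    rw [mem_Icc] at hk hk'
    omega
  rw [hsplit, sum_insert, sum_union hdisj, sum_map, sum_add_distrib, add_comm]
  · rfl
  · rw [map_add_right_Icc, mem_union, mem_Icc, mem_Icc]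
    omega

noncomputable def dedekindTerm (a b k : ℤ) : ℝ :=
  sawtooth ((k : ℝ) / b) * sawtooth ((k * a : ℝ) / b)

theorem dedekindTerm_pair {c m r : ℤ} (hc : Odd c) (h : IsCoprime c m) (hr₀ : 0 < r) (hr : r < m) :
    dedekindTerm (2 * c) (2 * m) r + dedekindTerm (2 * c) (2 * m) (r + m)
      = 2 * (dedekindTerm c (2 * m) r + dedekindTerm c (2 * m) (r + m))
        - ((⌊(r : ℚ) * c / m⌋.negOnePow : ℤ) : ℝ) / 4 := by
  obtain ⟨t, ht⟩ := hc
  have hmR : (0 : ℝ) < m := by exact_mod_cast hr₀.trans hr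
  have hx₀ : 0 < (r : ℝ) / (2 * m) := div_pos (by exact_mod_cast hr₀) (by positivity)
  have hx₁ : (r : ℝ) / (2 * m) < 1 / 2 := by
    rw [div_lt_iff₀ (by positivity)]
    linarith [(by exact_mod_cast hr : (r : ℝ) < m)]
  have hy : ∀ n : ℤ, 2 * ((r : ℝ) * c / (2 * m)) ≠ n := fun n hn =>
    not_dvd_mul_of_isCoprime h hr₀ hr ⟨n, by
      rw [mul_div_assoc', mul_div_mul_left _ _ two_ne_zero, div_eq_iff hmR.ne'] at hn
      exact_mod_cast hn.trans (mul_comm _ _)⟩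
  have hfloor : ⌊(r : ℚ) * c / m⌋ = ⌊2 * ((r : ℝ) * c / (2 * m))⌋ := by
    rw [← Rat.floor_cast (α := ℝ), mul_div_assoc', mul_div_mul_left _ _ two_ne_zero]
    push_cast
    rfl
  have e₁ : ((r + m : ℤ) : ℝ) / ((2 * m : ℤ) : ℝ) = r / (2 * m) + 1 / 2 := by
    push_cast; field_simp
  have e₂ : (r : ℝ) * ((2 * c : ℤ) : ℝ) / ((2 * m : ℤ) : ℝ) = 2 * (r * c / (2 * m)) := by
    push_cast; ring
  have e₃ : ((r + m : ℤ) : ℝ) * ((2 * c : ℤ) : ℝ) / ((2 * m : ℤ) : ℝ)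
      = 2 * (r * c / (2 * m)) + (c : ℤ) := by
    push_cast; field_simp
  have e₄ : ((r + m : ℤ) : ℝ) * (c : ℝ) / ((2 * m : ℤ) : ℝ)
      = r * c / (2 * m) + 1 / 2 + (t : ℤ) := by
    rw [ht]; push_cast; field_simp; ring
  simp only [dedekindTerm]
  rw [e₁, e₂, e₃, e₄, Int.cast_mul, Int.cast_two, sawtooth_add_intCast, sawtooth_add_intCast,
    hfloor]
  exact sawtooth_pair hx₀ hx₁ hy

theorem dedekindS_two_mul_two_mul {c m : ℤ} (hm : 1 ≤ m) (hc : Odd c) (h : IsCoprime c m) :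
    dedekindS (2 * c) (2 * m) = 2 * dedekindS c (2 * m) - (hardyS4 c m : ℝ) / 4 := by
  have hmid : ∀ a, dedekindTerm a (2 * m) m = 0 := fun a => by
    have hmR : (m : ℝ) ≠ 0 := by exact_mod_cast (by omega : m ≠ 0)
    rw [dedekindTerm, Int.cast_mul, Int.cast_two, div_mul_cancel_right₀ hmR, ← one_div,
      sawtooth_half, zero_mul]
  rw [dedekindS, dedekindS, abs_of_pos (by omega), hardyS4]
  change ∑ k ∈ _, dedekindTerm _ _ k = 2 * ∑ k ∈ _, dedekindTerm _ _ k - _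
  rw [sum_Icc_two_mul_eq_sum_pairs _ hm, sum_Icc_two_mul_eq_sum_pairs _ hm, hmid, hmid, add_zero,
    add_zero, mul_sum, Int.cast_sum, sum_div, ← sum_sub_distrib]
  refine sum_congr rfl fun r hr => ?_
  rw [mem_Icc] at hr
  exact dedekindTerm_pair hc h (by omega) (by omega)

/-- **Lemma 8.** For an even integer `d ≥ 2` and `c ≥ 1` with `gcd(d,c) = 1`,
`2 s(d,c) + s(2c,d) = (d² + c² + 1)/(6cd) - 1/2 - (1/4) S₄(c, d/2)`. -/
theorem dedekind_hardy_d_even (d c : ℤ) (hd : 2 ≤ d) (hde : Even d) (hc : 1 ≤ c)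
    (hcop : Int.gcd d c = 1) :
    2 * dedekindS d c + dedekindS (2 * c) d
      = ((d : ℝ) ^ 2 + (c : ℝ) ^ 2 + 1) / (6 * (c : ℝ) * d) - 1 / 2
        - (1 / 4) * (hardyS4 c (d / 2) : ℝ) := by
  obtain ⟨m, hm⟩ := hde
  replace hm : d = 2 * m := by omega
  have hdc : IsCoprime d c := Int.isCoprime_iff_gcd_eq_one.2 hcop
  have hodd : Odd c := Int.isCoprime_two_left.1 (hm ▸ hdc).of_mul_left_left
  have hcm : IsCoprime c m := (hm ▸ hdc).of_mul_left_right.symm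
  have hrecip := dedekindS_add_dedekindS (by omega) hc hdc
  have hhardy := dedekindS_two_mul_two_mul (by omega) hodd hcm
  rw [← hm] at hhardy
  rw [hhardy, show d / 2 = m by omega]
  linear_combination 2 * hrecip
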